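/- Measuring the projection onto the symmetric subspace of H^{⊗(n+1)} on input states of the form ψ ⊗ φ^{⊗n} is equivalent to the single-system effect operator E = |φ⟩⟨φ| + (1/(n+1))(1 − |φ⟩⟨φ|): for every unit ψ, ⟨ψ ⊗ φ^{⊗n}, Π_S(ψ ⊗ φ^{⊗n})⟩ = ⟨ψ, Eψ⟩. -/

import Mathlib

noncomputable section

/-- The `n`-fold tensor power `H^{⊗n}` of `H = ℂ^d`, realized concretely as
`EuclideanSpace ℂ (Fin n → Fin d)`. -/
abbrev TPow (d n : ℕ) := EuclideanSpace ℂ (Fin n → Fin d)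

/-- The permutation-symmetric subspace of `H^{⊗n}`: vectors invariant under all
permutations of the tensor factors. -/
def SymSub (d n : ℕ) : Submodule ℂ (TPow d n) where
  carrier := {v | ∀ σ : Equiv.Perm (Fin n), ∀ f : Fin n → Fin d, v (f ∘ σ) = v f}
  add_mem' := by
    intro a b ha hb σ f
    show a (f ∘ σ) + b (f ∘ σ) = a f + b f
    rw [ha σ f, hb σ f]
  zero_mem' := by intro σ f; rfl
  smul_mem' := by
    intro c v hv σ f
    show c * v (f ∘ σ) = c * v f
    rw [hv σ f]

/-- The state `ψ ⊗ φ^{⊗n}` in `H^{⊗(n+1)}`: `ψ` on factor `0`, `φ` on each of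
the remaining `n` factors. -/
def onePlusPow {d n : ℕ} (ψ φ : EuclideanSpace ℂ (Fin d)) : TPow d (n + 1) :=
  WithLp.toLp 2 (fun f => ψ (f 0) * ∏ i : Fin n, φ (f i.succ))

open scoped Matrix

/-- The single-system effect operator `E = |φ⟩⟨φ| + (1/(n+1))(1 − |φ⟩⟨φ|)`. -/
def effectE (d n : ℕ) (φ : EuclideanSpace ℂ (Fin d)) : Matrix (Fin d) (Fin d) ℂ :=
  Matrix.vecMulVec φ (star (φ : Fin d → ℂ))
    + ((n : ℂ) + 1)⁻¹ • (1 - Matrix.vecMulVec φ (star (φ : Fin d → ℂ)))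

open scoped InnerProductSpace

/-!
The orthogonal projection onto the symmetric subspace is the average of the unitary operators
permuting the tensor factors. For a product state `u₀ ⊗ ⋯ ⊗ uₙ` the overlap with its permutation
by `σ` factorizes as `∏ j, ⟪u j, u (σ⁻¹ j)⟫`; for `ψ ⊗ φ^{⊗n}` with `‖φ‖ = 1` this is `⟪ψ, ψ⟫`
for the `n!` permutations fixing the first factor and `|⟪φ, ψ⟫|²` for the other `n · n!`.
Averaging gives `(⟪ψ, ψ⟫ + n |⟪φ, ψ⟫|²) / (n + 1)`, which is also `⟪ψ, E ψ⟫`.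
-/

lemma sum_perm_ite_apply_zero {R : Type*} [CommSemiring R] (n : ℕ) (a b : R) :
    ∑ σ : Equiv.Perm (Fin (n + 1)), (if σ 0 = 0 then a else b) = n.factorial * (a + n * b) := by
  rw [← Equiv.sum_comp Equiv.Perm.decomposeFin.symm, Fintype.sum_prod_type]
  simp [Fin.sum_univ_succ, Fin.succ_ne_zero, Fintype.card_perm]
  ring

section

variable {d n : ℕ}

def permuteFactors (σ : Equiv.Perm (Fin n)) : TPow d n ≃ₗᵢ[ℂ] TPow d n :=
  LinearIsometryEquiv.piLpCongrLeft 2 ℂ ℂ (σ.arrowCongr (Equiv.refl (Fin d)))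

@[simp]
lemma permuteFactors_apply (σ : Equiv.Perm (Fin n)) (v : TPow d n) (f : Fin n → Fin d) :
    permuteFactors σ v f = v (f ∘ σ) :=
  rfl

lemma permuteFactors_mul (σ τ : Equiv.Perm (Fin n)) (v : TPow d n) :
    permuteFactors (σ * τ) v = permuteFactors σ (permuteFactors τ v) :=
  rfl

lemma mem_symSub_iff {v : TPow d n} : v ∈ SymSub d n ↔ ∀ σ, permuteFactors σ v = v :=
  ⟨fun hv σ => PiLp.ext (hv σ), fun hv σ f => congrArg (· f) (hv σ)⟩

def symmetrize (v : TPow d n) : TPow d n :=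
  (n.factorial : ℂ)⁻¹ • ∑ σ : Equiv.Perm (Fin n), permuteFactors σ v

lemma symmetrize_mem_symSub (v : TPow d n) : symmetrize v ∈ SymSub d n := by
  refine mem_symSub_iff.2 fun τ => ?_
  simp only [symmetrize, map_smul, map_sum, ← permuteFactors_mul]
  congr 1
  exact Equiv.sum_comp (Equiv.mulLeft τ) (fun σ => permuteFactors σ v)

lemma inner_permuteFactors_left_of_mem {w : TPow d n} (hw : w ∈ SymSub d n)
    (σ : Equiv.Perm (Fin n)) (v : TPow d n) : ⟪permuteFactors σ v, w⟫_ℂ = ⟪v, w⟫_ℂ := by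
  conv_lhs => rw [← mem_symSub_iff.1 hw σ]
  exact LinearIsometryEquiv.inner_map_map _ v w

lemma inner_symmetrize_left_of_mem {w : TPow d n} (hw : w ∈ SymSub d n) (v : TPow d n) :
    ⟪symmetrize v, w⟫_ℂ = ⟪v, w⟫_ℂ := by
  have hn : (n.factorial : ℂ) ≠ 0 := Nat.cast_ne_zero.2 n.factorial_ne_zero
  simp only [symmetrize, inner_smul_left, sum_inner, inner_permuteFactors_left_of_mem hw,
    Finset.sum_const, Finset.card_univ, Fintype.card_perm, Fintype.card_fin, nsmul_eq_mul,
    map_inv₀, map_natCast]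
  field_simp

lemma starProjection_symSub (v : TPow d n) : (SymSub d n).starProjection v = symmetrize v :=
  Submodule.eq_starProjection_of_mem_of_inner_eq_zero (symmetrize_mem_symSub v) fun w hw => by
    rw [inner_sub_left, inner_symmetrize_left_of_mem hw, sub_self]

def prodState (u : Fin n → EuclideanSpace ℂ (Fin d)) : TPow d n :=
  WithLp.toLp 2 fun f => ∏ j, u j (f j)

lemma inner_prodState (u w : Fin n → EuclideanSpace ℂ (Fin d)) :
    ⟪prodState u, prodState w⟫_ℂ = ∏ j, ⟪u j, w j⟫_ℂ := by
  simp only [prodState, PiLp.inner_apply, RCLike.inner_apply, map_prod, ← Finset.prod_mul_distrib]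
  exact (Fintype.prod_sum fun j x => w j x * (starRingEnd ℂ) (u j x)).symm

lemma permuteFactors_prodState (σ : Equiv.Perm (Fin n)) (u : Fin n → EuclideanSpace ℂ (Fin d)) :
    permuteFactors σ (prodState u) = prodState (u ∘ σ.symm) := by
  ext f
  simpa [prodState] using (Equiv.prod_comp σ fun j => u (σ.symm j) (f j))

lemma onePlusPow_eq_prodState (ψ φ : EuclideanSpace ℂ (Fin d)) :
    onePlusPow (n := n) ψ φ = prodState fun j => if j = 0 then ψ else φ := by
  ext f
  simp [onePlusPow, prodState, Fin.prod_univ_succ, Fin.succ_ne_zero]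

lemma inner_onePlusPow_permuteFactors {φ : EuclideanSpace ℂ (Fin d)} (hφ : ‖φ‖ = 1)
    (ψ : EuclideanSpace ℂ (Fin d)) (σ : Equiv.Perm (Fin (n + 1))) :
    ⟪onePlusPow ψ φ, permuteFactors σ (onePlusPow ψ φ)⟫_ℂ
      = if σ 0 = 0 then ⟪ψ, ψ⟫_ℂ else ⟪ψ, φ⟫_ℂ * ⟪φ, ψ⟫_ℂ := by
  rw [onePlusPow_eq_prodState, permuteFactors_prodState, inner_prodState]
  simp only [Function.comp_apply]
  split_ifs with h0
  · rw [Fintype.prod_eq_single 0 fun j hj => ?_]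
    · simp [σ.symm_apply_eq.2 h0.symm]
    · have : σ.symm j ≠ 0 := by rwa [Ne, Equiv.symm_apply_eq, h0]
      simp [hj, this, hφ]
  · rw [Fintype.prod_eq_mul 0 (σ 0) (Ne.symm h0) fun j hj => ?_]
    · have : σ.symm 0 ≠ 0 := by rwa [Ne, Equiv.symm_apply_eq, eq_comm]
      simp [h0, this]
    · have : σ.symm j ≠ 0 := by rw [Ne, Equiv.symm_apply_eq]; exact hj.2
      simp [hj.1, this, hφ]

lemma inner_onePlusPow_starProjection {φ : EuclideanSpace ℂ (Fin d)} (hφ : ‖φ‖ = 1)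
    (ψ : EuclideanSpace ℂ (Fin d)) :
    ⟪onePlusPow ψ φ, (SymSub d (n + 1)).starProjection (onePlusPow ψ φ)⟫_ℂ
      = ((n : ℂ) + 1)⁻¹ * (⟪ψ, ψ⟫_ℂ + n * (⟪ψ, φ⟫_ℂ * ⟪φ, ψ⟫_ℂ)) := by
  have hn : (n.factorial : ℂ) ≠ 0 := Nat.cast_ne_zero.2 n.factorial_ne_zero
  rw [starProjection_symSub, symmetrize, inner_smul_right, inner_sum]
  simp only [inner_onePlusPow_permuteFactors hφ]
  rw [sum_perm_ite_apply_zero, Nat.factorial_succ]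
  push_cast
  field_simp

lemma toEuclideanLin_effectE (φ : EuclideanSpace ℂ (Fin d)) :
    Matrix.toEuclideanLin (effectE d n φ)
      = (InnerProductSpace.rankOne ℂ φ φ : EuclideanSpace ℂ (Fin d) →L[ℂ] _).toLinearMap
        + ((n : ℂ) + 1)⁻¹ • (1 - (InnerProductSpace.rankOne ℂ φ φ).toLinearMap) := by
  rw [effectE, ← InnerProductSpace.symm_toEuclideanLin_rankOne]
  simp [Matrix.toLpLin_one, ← Module.End.one_eq_id]

lemma inner_toEuclideanLin_effectE (φ ψ : EuclideanSpace ℂ (Fin d)) :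
    ⟪ψ, Matrix.toEuclideanLin (effectE d n φ) ψ⟫_ℂ
      = ((n : ℂ) + 1)⁻¹ * (⟪ψ, ψ⟫_ℂ + n * (⟪ψ, φ⟫_ℂ * ⟪φ, ψ⟫_ℂ)) := by
  simp only [toEuclideanLin_effectE, LinearMap.add_apply, LinearMap.smul_apply,
    LinearMap.sub_apply, Module.End.one_apply, ContinuousLinearMap.coe_coe,
    InnerProductSpace.rankOne_apply, inner_add_right, inner_smul_right, inner_sub_right]
  field_simp
  ring

end

/-- Measuring the projection onto the symmetric subspace of
`H^{⊗(n+1)}` on `ψ ⊗ φ^{⊗n}` is equivalent to measuring the effect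
`E = |φ⟩⟨φ| + (1/(n+1))(1 − |φ⟩⟨φ|)` on `ψ`:
`⟨ψ ⊗ φ^{⊗n}, Π_S (ψ ⊗ φ^{⊗n})⟩ = ⟨ψ, Eψ⟩` for every unit vector `ψ`. -/
theorem stmt_14 (d n : ℕ) (φ : EuclideanSpace ℂ (Fin d)) (hφ : ‖φ‖ = 1) :
    ∀ ψ : EuclideanSpace ℂ (Fin d), ‖ψ‖ = 1 →
      inner ℂ (onePlusPow ψ φ)
          ((Submodule.orthogonalProjection (SymSub d (n + 1)) (onePlusPow ψ φ) : TPow d (n + 1)))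
        = (inner ℂ ψ (Matrix.toEuclideanLin (effectE d n φ) ψ) : ℂ) := by
  intro ψ _
  rw [← Submodule.starProjection_apply, inner_onePlusPow_starProjection hφ,
    inner_toEuclideanLin_effectE]
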